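/- Under Assumptions A1 and A2, let (x̄, ȳ, λ̄) be an optimal primal–dual pair of the RMP, let ρ ≥ 1, and suppose for each session s: γ(s,λ̄) > 0, (1/ρ)·γ_ρ(s,λ̄) ≤ γ(s,λ̄) ≤ γ_ρ(s,λ̄), and γ_ρ(s,λ̄) = γ'(s,λ̄) (the condition satisfied at convergence of column generation with ρ-approximate tree scheduling). Assume also x̄_s > m_s for all s (Assumption A3) and U_s(m_s) − m_s·U_s'(m_s) ≥ 0 for all s (Assumption A4). Then θ'(λ̄) ≤ Σ_s U_s(x_s*) ≤ θ(ρ·λ̄) ≤ ρ·θ'(λ̄), where Σ_s U_s(x_s*) = f* is the optimal value of the MP. -/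

import Mathlib

/-!
Let `γ'` be the cheapest tree costs in `T'` under `λ̄` and `C = ∑ₑ λ̄ₑ cₑ`. Sending each session's
whole rate on a cheapest tree of `T'` is feasible for the RMP, so
`∑ U(z) + C - ∑ zₛ γ'ₛ ≤ θ'(λ̄)` on the whole box. Weak duality for `(x̄, ȳ)` gives
`∑ x̄ₛ γ'ₛ ≤ C`, so `x̄` maximizes the separable profit `∑ Uₛ(zₛ) - zₛ γ'ₛ`, and since
`x̄ₛ > mₛ`, concavity and A4 make each session's profit nonnegative; hence `C ≤ θ'(λ̄)`.
As `γ'ₛ ≤ ρ γₛ`, the same routing bound gives `θ(ρλ̄) ≤ θ'(λ̄) + (ρ - 1) C ≤ ρ θ'(λ̄)`.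
The other two inequalities are weak duality.
-/

open Set Function

variable {S T E : Type}

def sessionRate [Fintype T] [DecidableEq S] (σ : T → S) (y : T → ℝ) (s : S) : ℝ :=
  ∑ t, if σ t = s then y t else 0

def treeCost [Fintype E] (H : E → T → ℝ) (lam : E → ℝ) (t : T) : ℝ :=
  ∑ e, H e t * lam e

def rateDomain [Fintype T] [DecidableEq S] (σ : T → S) (m M : S → ℝ) :
    Set ((S → ℝ) × (T → ℝ)) :=
  {p | (∀ t, 0 ≤ p.2 t) ∧ (∀ s, p.1 s = sessionRate σ p.2 s) ∧ ∀ s, p.1 s ∈ Icc (m s) (M s)}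

def lagrangian [Fintype S] [Fintype T] [Fintype E] (U : S → ℝ → ℝ) (H : E → T → ℝ)
    (c : E → ℝ) (x : S → ℝ) (y : T → ℝ) (lam : E → ℝ) : ℝ :=
  ∑ s, U s (x s) + ∑ e, lam e * (c e - ∑ t, H e t * y t)

def route [Fintype S] [DecidableEq T] (τ : S → T) (z : S → ℝ) (t : T) : ℝ :=
  ∑ s, if τ s = t then z s else 0

theorem sum_sessionRate_mul [Fintype S] [Fintype T] [DecidableEq S] (σ : T → S)
    (y : T → ℝ) (g : S → ℝ) :
    ∑ s, sessionRate σ y s * g s = ∑ t, y t * g (σ t) := by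
  simp only [sessionRate, Finset.sum_mul, ite_mul, zero_mul]
  rw [Finset.sum_comm]
  simp [Finset.sum_ite_eq]

theorem sum_sessionRate_mul_le [Fintype S] [Fintype T] [DecidableEq S] {σ : T → S}
    {y : T → ℝ} {g : S → ℝ} {w : T → ℝ} (hy : ∀ t, 0 ≤ y t)
    (hgw : ∀ t, y t ≠ 0 → g (σ t) ≤ w t) :
    ∑ s, sessionRate σ y s * g s ≤ ∑ t, y t * w t := by
  rw [sum_sessionRate_mul]
  refine Finset.sum_le_sum fun t _ => ?_
  rcases eq_or_ne (y t) 0 with h | h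
  · simp [h]
  · exact mul_le_mul_of_nonneg_left (hgw t h) (hy t)

theorem treeCost_const_mul [Fintype E] (H : E → T → ℝ) (r : ℝ) (lam : E → ℝ) (t : T) :
    treeCost H (fun e => r * lam e) t = r * treeCost H lam t := by
  simp only [treeCost, Finset.mul_sum]
  exact Finset.sum_congr rfl fun _ _ => by ring

theorem sum_mul_treeCost [Fintype T] [Fintype E] (H : E → T → ℝ) (lam : E → ℝ) (y : T → ℝ) :
    ∑ t, y t * treeCost H lam t = ∑ e, lam e * ∑ t, H e t * y t := by
  simp only [treeCost, Finset.mul_sum]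
  rw [Finset.sum_comm]
  exact Finset.sum_congr rfl fun _ _ => Finset.sum_congr rfl fun _ _ => by ring

theorem sum_mul_treeCost_le [Fintype T] [Fintype E] {H : E → T → ℝ} {c lam : E → ℝ}
    {y : T → ℝ} (hlam : ∀ e, 0 ≤ lam e) (hcap : ∀ e, ∑ t, H e t * y t ≤ c e) :
    ∑ t, y t * treeCost H lam t ≤ ∑ e, lam e * c e := by
  rw [sum_mul_treeCost]
  exact Finset.sum_le_sum fun e _ => mul_le_mul_of_nonneg_left (hcap e) (hlam e)

theorem lagrangian_eq [Fintype S] [Fintype T] [Fintype E] (U : S → ℝ → ℝ)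
    (H : E → T → ℝ) (c : E → ℝ) (x : S → ℝ) (y : T → ℝ) (lam : E → ℝ) :
    lagrangian U H c x y lam =
      ∑ s, U s (x s) + ∑ e, lam e * c e - ∑ t, y t * treeCost H lam t := by
  simp only [lagrangian, sum_mul_treeCost, mul_sub, Finset.sum_sub_distrib]
  ring

theorem sum_le_lagrangian [Fintype S] [Fintype T] [Fintype E] {U : S → ℝ → ℝ}
    {H : E → T → ℝ} {c lam : E → ℝ} {x : S → ℝ} {y : T → ℝ} (hlam : ∀ e, 0 ≤ lam e)
    (hcap : ∀ e, ∑ t, H e t * y t ≤ c e) :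
    ∑ s, U s (x s) ≤ lagrangian U H c x y lam := by
  rw [lagrangian_eq]
  linarith [sum_mul_treeCost_le hlam hcap]

section route

variable [Fintype S] [DecidableEq T]

theorem sum_route_mul [Fintype T] (τ : S → T) (z : S → ℝ) (w : T → ℝ) :
    ∑ t, route τ z t * w t = ∑ s, z s * w (τ s) := by
  simp only [route, Finset.sum_mul, ite_mul, zero_mul]
  rw [Finset.sum_comm]
  simp [Finset.sum_ite_eq]

theorem sessionRate_route [Fintype T] [DecidableEq S] {σ : T → S} {τ : S → T}
    (hτ : Function.LeftInverse σ τ) (z : S → ℝ) (s : S) :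
    sessionRate σ (route τ z) s = z s := by
  have h := sum_route_mul τ z fun t => if σ t = s then 1 else 0
  simp only [mul_ite, mul_one, mul_zero, hτ _] at h
  simpa [sessionRate, Finset.sum_ite_eq'] using h

theorem route_nonneg {τ : S → T} {z : S → ℝ} (hz : ∀ s, 0 ≤ z s) (t : T) :
    0 ≤ route τ z t :=
  Finset.sum_nonneg fun s _ => by split_ifs <;> simp [hz s]

theorem route_eq_zero {τ : S → T} {T' : Finset T} (hτ : ∀ s, τ s ∈ T') {t : T}
    (ht : t ∉ T') (z : S → ℝ) : route τ z t = 0 :=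
  Finset.sum_eq_zero fun s _ => if_neg fun h : τ s = t => ht (h ▸ hτ s)

end route

theorem IsMaxOn.apply_of_sum {ι α β : Type*} [Fintype ι] [DecidableEq ι]
    [AddCommMonoid β] [PartialOrder β] [IsOrderedCancelAddMonoid β] {φ : ι → α → β}
    {I : ι → Set α} {x : ι → α} (h : IsMaxOn (fun z => ∑ i, φ i (z i)) (univ.pi I) x)
    (hx : x ∈ univ.pi I) (i : ι) : IsMaxOn (φ i) (I i) (x i) := by
  refine isMaxOn_iff.2 fun w hw => ?_
  have hupd : ∑ j, φ j (update x i w j) ≤ ∑ j, φ j (x j) :=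
    isMaxOn_iff.1 h _ ((update_mem_pi_iff_of_mem hx).2 fun _ => hw)
  rw [← Finset.add_sum_erase _ _ (Finset.mem_univ i),
    ← Finset.add_sum_erase _ _ (Finset.mem_univ i), update_self,
    Finset.sum_congr rfl fun j hj => by rw [update_of_ne (Finset.ne_of_mem_erase hj)]] at hupd
  exact le_of_add_le_add_right hupd

theorem ConcaveOn.sub_mul_nonneg {D : Set ℝ} {f : ℝ → ℝ} {a x g : ℝ} (hf : ConcaveOn ℝ D f)
    (ha : a ∈ D) (hx : x ∈ D) (hax : a < x) (hfa : DifferentiableWithinAt ℝ f D a)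
    (ha0 : 0 ≤ a) (htangent : 0 ≤ f a - a * derivWithin f D a)
    (hmax : f a - a * g ≤ f x - x * g) : 0 ≤ f x - x * g := by
  have hslope : g ≤ derivWithin f D a := by
    refine le_trans ?_ (hf.slope_le_derivWithin ha hx hax hfa)
    rw [slope_def_field, le_div_iff₀ (sub_pos.2 hax)]
    linarith
  nlinarith [mul_le_mul_of_nonneg_left hslope ha0]

section model

variable [Fintype S] [Fintype T] [Fintype E] [DecidableEq S] {σ : T → S} {H : E → T → ℝ}
  {c lam : E → ℝ} {m M : S → ℝ} {U : S → ℝ → ℝ} {T' : Finset T} {γ' : S → ℝ} {v : ℝ}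

/-- Sending each session's whole rate on a cheapest tree of `T'` is a point of the restricted
domain whose Lagrangian is the left-hand side. -/
theorem sum_add_sub_le_of_lagrangian_le (hm : ∀ s, 0 ≤ m s)
    (hγ' : ∀ s, ∃ t ∈ T', σ t = s ∧ γ' s = treeCost H lam t)
    (hv : ∀ p ∈ rateDomain σ m M, (∀ t ∉ T', p.2 t = 0) → lagrangian U H c p.1 p.2 lam ≤ v)
    {z : S → ℝ} (hz : ∀ s, z s ∈ Icc (m s) (M s)) :
    ∑ s, U s (z s) + ∑ e, lam e * c e - ∑ s, z s * γ' s ≤ v := by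
  classical
  choose τ hτT' hστ hγτ using hγ'
  have hmem : (z, route τ z) ∈ rateDomain σ m M :=
    ⟨route_nonneg fun s => (hm s).trans (hz s).1, fun s => (sessionRate_route hστ z s).symm, hz⟩
  have h := hv _ hmem fun t ht => route_eq_zero hτT' ht z
  simp only [lagrangian_eq, sum_route_mul, ← hγτ] at h
  exact h

theorem sum_mul_minCost_le {x : S → ℝ} {y : T → ℝ} (hlam : ∀ e, 0 ≤ lam e)
    (hy : ∀ t, 0 ≤ y t) (hxy : ∀ s, x s = sessionRate σ y s) (hyT' : ∀ t ∉ T', y t = 0)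
    (hcap : ∀ e, ∑ t, H e t * y t ≤ c e)
    (hγ' : ∀ s, ∀ t ∈ T', σ t = s → γ' s ≤ treeCost H lam t) :
    ∑ s, x s * γ' s ≤ ∑ e, lam e * c e := calc
  ∑ s, x s * γ' s = ∑ s, sessionRate σ y s * γ' s :=
      Finset.sum_congr rfl fun s _ => by rw [hxy s]
  _ ≤ ∑ t, y t * treeCost H lam t :=
      sum_sessionRate_mul_le hy fun t hyt => hγ' _ t (by_contra fun ht => hyt (hyT' t ht)) rfl
  _ ≤ ∑ e, lam e * c e := sum_mul_treeCost_le hlam hcap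

theorem sum_mul_capacity_le (hm : ∀ s, 0 ≤ m s)
    (hUconc : ∀ s, ConcaveOn ℝ (Icc (m s) (M s)) (U s))
    (hUdiff : ∀ s, DifferentiableWithinAt ℝ (U s) (Icc (m s) (M s)) (m s))
    (htangent : ∀ s, 0 ≤ U s (m s) - m s * derivWithin (U s) (Icc (m s) (M s)) (m s))
    (hγ' : ∀ s, ∃ t ∈ T', σ t = s ∧ γ' s = treeCost H lam t)
    (hv : ∀ p ∈ rateDomain σ m M, (∀ t ∉ T', p.2 t = 0) → lagrangian U H c p.1 p.2 lam ≤ v)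
    {x : S → ℝ} (hx : ∀ s, x s ∈ Icc (m s) (M s)) (hxm : ∀ s, m s < x s)
    (hxv : ∑ s, U s (x s) = v) (hxc : ∑ s, x s * γ' s ≤ ∑ e, lam e * c e) :
    ∑ e, lam e * c e ≤ v := by
  have hmax : IsMaxOn (fun z => ∑ s, (U s (z s) - z s * γ' s))
      (univ.pi fun s => Icc (m s) (M s)) x := isMaxOn_iff.2 fun z hz => by
    have := sum_add_sub_le_of_lagrangian_le hm hγ' hv (mem_univ_pi.1 hz)
    simp only [Finset.sum_sub_distrib]
    linarith
  -- concavity bounds `γ' s` by `U'(m s)`, and A4 says the tangent at `m s` has nonnegative intercept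
  have hprofit (s : S) : x s * γ' s ≤ U s (x s) := by
    have hms : m s ∈ Icc (m s) (M s) := ⟨le_rfl, (hx s).1.trans (hx s).2⟩
    exact sub_nonneg.1 <| (hUconc s).sub_mul_nonneg hms (hx s) (hxm s) (hUdiff s) (hm s)
      (htangent s) <| isMaxOn_iff.1
        (hmax.apply_of_sum (φ := fun s w => U s w - w * γ' s) (mem_univ_pi.2 hx) s) _ hms
  calc ∑ e, lam e * c e ≤ ∑ s, x s * γ' s := by
        linarith [sum_add_sub_le_of_lagrangian_le hm hγ' hv hx]
    _ ≤ ∑ s, U s (x s) := Finset.sum_le_sum fun s _ => hprofit s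
    _ = v := hxv

theorem lagrangian_const_mul_le {ρ : ℝ} (hρ : 1 ≤ ρ) (hm : ∀ s, 0 ≤ m s)
    (hγ' : ∀ s, ∃ t ∈ T', σ t = s ∧ γ' s = treeCost H lam t)
    (hv : ∀ p ∈ rateDomain σ m M, (∀ t ∉ T', p.2 t = 0) → lagrangian U H c p.1 p.2 lam ≤ v)
    (hprice : ∑ e, lam e * c e ≤ v) (hγ'ρ : ∀ t, γ' (σ t) ≤ ρ * treeCost H lam t)
    {q : (S → ℝ) × (T → ℝ)} (hq : q ∈ rateDomain σ m M) :
    lagrangian U H c q.1 q.2 (fun e => ρ * lam e) ≤ ρ * v := by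
  have hroute := sum_add_sub_le_of_lagrangian_le hm hγ' hv hq.2.2
  have hrate : ∑ s, q.1 s * γ' s ≤ ∑ t, q.2 t * treeCost H (fun e => ρ * lam e) t := by
    simp only [hq.2.1, treeCost_const_mul]
    exact sum_sessionRate_mul_le hq.1 fun t _ => hγ'ρ t
  have hscale : ∑ e, ρ * lam e * c e = ρ * ∑ e, lam e * c e := by
    simp only [mul_assoc, Finset.mul_sum]
  rw [lagrangian_eq, hscale]
  nlinarith [mul_le_mul_of_nonneg_left hprice (sub_nonneg.2 hρ)]

end model

theorem imperfect_tree_scheduling_bound_general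
    {S T E : Type} [Fintype S] [Fintype T] [Fintype E]
    [DecidableEq S]
    (σ : T → S)
    (H : E → T → ℝ)
    (c : E → ℝ)
    (m M : S → ℝ) (hm : ∀ s, 0 ≤ m s)
    (U : S → ℝ → ℝ)
    -- Assumption A1
    (hUconc : ∀ s, StrictConcaveOn ℝ (Set.Icc (m s) (M s)) (U s))
    (hUdiff : ∀ s, ContDiffOn ℝ 1 (U s) (Set.Icc (m s) (M s)))
    -- the domain D
    (D : Set ((S → ℝ) × (T → ℝ)))
    (hD : D = {p | (∀ t, 0 ≤ p.2 t) ∧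
      (∀ s, p.1 s = ∑ t, if σ t = s then p.2 t else 0) ∧
      (∀ s, p.1 s ∈ Set.Icc (m s) (M s))})
    -- the Lagrangian
    (L : (S → ℝ) → (T → ℝ) → (E → ℝ) → ℝ)
    (hL : ∀ x y lam, L x y lam =
      ∑ s, U s (x s) + ∑ e, lam e * (c e - ∑ t, H e t * y t))
    -- the optimal value of the master problem
    (fStar : ℝ)
    (hfStar : IsGreatest {v | ∃ p ∈ D, (∀ e, ∑ t, H e t * p.2 t ≤ c e) ∧
      v = ∑ s, U s (p.1 s)} fStar)
    -- the dual function
    (θ : (E → ℝ) → ℝ)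
    (hθ : ∀ lam : E → ℝ, IsGreatest {v | ∃ p ∈ D, v = L p.1 p.2 lam} (θ lam))
    -- the restricted tree set T', containing at least one tree of every session
    (T' : Finset T)
    -- the domain D' of the restricted master problem
    (D' : Set ((S → ℝ) × (T → ℝ)))
    (hD' : D' = {p | p ∈ D ∧ ∀ t ∉ T', p.2 t = 0})
    -- the dual function of the RMP
    (θ' : (E → ℝ) → ℝ)
    (hθ' : ∀ lam : E → ℝ, IsGreatest {v | ∃ p ∈ D', v = L p.1 p.2 lam} (θ' lam))
    -- (x̄, ȳ, λ̄) is an optimal primal–dual pair of the RMP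
    (xbar : S → ℝ) (ybar : T → ℝ) (lambar : E → ℝ)
    (hlambar_nonneg : ∀ e, 0 ≤ lambar e)
    (hbar_feas : (xbar, ybar) ∈ D' ∧ ∀ e, ∑ t, H e t * ybar t ≤ c e)
    (hduality : ∑ s, U s (xbar s) = θ' lambar)
    -- the global and local minimum tree costs under λ̄
    (γbar γ'bar : S → ℝ)
    (hγbar : ∀ s, IsLeast {w | ∃ t, σ t = s ∧ w = ∑ e, H e t * lambar e} (γbar s))
    (hγ'bar : ∀ s,
      IsLeast {w | ∃ t ∈ T', σ t = s ∧ w = ∑ e, H e t * lambar e} (γ'bar s))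
    -- the approximation ratio ρ and the ρ-approximate tree costs at λ̄
    (ρ : ℝ) (hρ : 1 ≤ ρ) (γρ : S → ℝ)
    (hγρ : ∀ s, (1 / ρ) * γρ s ≤ γbar s ∧ γbar s ≤ γρ s)
    -- the condition satisfied at convergence of column generation
    (hconv : ∀ s, γρ s = γ'bar s)
    -- Assumption A3
    (hA3 : ∀ s, m s < xbar s)
    -- Assumption A4
    (hA4 : ∀ s, 0 ≤ U s (m s) -
      m s * derivWithin (U s) (Set.Icc (m s) (M s)) (m s))
 :
    θ' lambar ≤ fStar ∧ fStar ≤ θ (fun e => ρ * lambar e) ∧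
    θ (fun e => ρ * lambar e) ≤ ρ * θ' lambar := by
  subst hD hD'
  obtain rfl : L = lagrangian U H c := funext fun x => funext fun y => funext (hL x y)
  obtain ⟨⟨hbarD, hbar_supp⟩, hbar_cap⟩ := hbar_feas
  have hρpos : 0 < ρ := one_pos.trans_le hρ
  have hθ'_ub (p) (hp : p ∈ rateDomain σ m M) (hpT' : ∀ t ∉ T', p.2 t = 0) :
      lagrangian U H c p.1 p.2 lambar ≤ θ' lambar := (hθ' lambar).2 ⟨p, ⟨hp, hpT'⟩, rfl⟩
  have hγ'_att (s : S) := (hγ'bar s).1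
  have hγ'ρ (t : T) : γ'bar (σ t) ≤ ρ * treeCost H lambar t := calc
    γ'bar (σ t) = γρ (σ t) := (hconv _).symm
    _ ≤ ρ * γbar (σ t) := by
      simpa only [one_div_mul_eq_div, div_le_iff₀' hρpos] using (hγρ (σ t)).1
    _ ≤ ρ * treeCost H lambar t := by gcongr; exact (hγbar _).2 ⟨t, rfl, rfl⟩
  have hprice := sum_mul_capacity_le hm (fun s => (hUconc s).concaveOn)
    (fun s => (hUdiff s).differentiableOn one_ne_zero _ ⟨le_rfl, (hA3 s).le.trans (hbarD.2.2 s).2⟩)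
    hA4 hγ'_att hθ'_ub hbarD.2.2 hA3 hduality <|
      sum_mul_minCost_le hlambar_nonneg hbarD.1 hbarD.2.1 hbar_supp hbar_cap
        fun s t ht hts => (hγ'bar s).2 ⟨t, ht, hts, rfl⟩
  refine ⟨hduality ▸ hfStar.2 ⟨_, hbarD, hbar_cap, rfl⟩, ?_, ?_⟩
  · obtain ⟨p, hp, hpcap, rfl⟩ := hfStar.1
    exact (sum_le_lagrangian (fun e => mul_nonneg hρpos.le (hlambar_nonneg e)) hpcap).trans
      ((hθ _).2 ⟨p, hp, rfl⟩)
  · obtain ⟨q, hq, hθq⟩ := (hθ _).1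
    exact hθq ▸ lagrangian_const_mul_le hρ hm hγ'_att hθ'_ub hprice hγ'ρ hq

/-- the performance bound of imperfect global tree scheduling:
θ'(λ̄) ≤ f* ≤ θ(ρλ̄) ≤ ρ·θ'(λ̄). -/
theorem imperfect_tree_scheduling_bound
    {S T E : Type} [Fintype S] [Fintype T] [Fintype E]
    [Nonempty S] [Nonempty T] [Nonempty E] [DecidableEq S] [DecidableEq T]
    (σ : T → S) (hσ : Function.Surjective σ)
    (H : E → T → ℝ) (hH : ∀ e t, H e t = 0 ∨ H e t = 1)
    (c : E → ℝ) (hc : ∀ e, 0 < c e)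
    (m M : S → ℝ) (hm : ∀ s, 0 ≤ m s) (hmM : ∀ s, m s < M s)
    (U : S → ℝ → ℝ)
    -- Assumption A1
    (hUmono : ∀ s, MonotoneOn (U s) (Set.Icc (m s) (M s)))
    (hUconc : ∀ s, StrictConcaveOn ℝ (Set.Icc (m s) (M s)) (U s))
    (hUdiff : ∀ s, ContDiffOn ℝ 1 (U s) (Set.Icc (m s) (M s)))
    -- the domain D
    (D : Set ((S → ℝ) × (T → ℝ)))
    (hD : D = {p | (∀ t, 0 ≤ p.2 t) ∧
      (∀ s, p.1 s = ∑ t, if σ t = s then p.2 t else 0) ∧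
      (∀ s, p.1 s ∈ Set.Icc (m s) (M s))})
    -- the Lagrangian
    (L : (S → ℝ) → (T → ℝ) → (E → ℝ) → ℝ)
    (hL : ∀ x y lam, L x y lam =
      ∑ s, U s (x s) + ∑ e, lam e * (c e - ∑ t, H e t * y t))
    -- the optimal value of the master problem
    (fStar : ℝ)
    (hfStar : IsGreatest {v | ∃ p ∈ D, (∀ e, ∑ t, H e t * p.2 t ≤ c e) ∧
      v = ∑ s, U s (p.1 s)} fStar)
    -- the dual function
    (θ : (E → ℝ) → ℝ)
    (hθ : ∀ lam : E → ℝ, IsGreatest {v | ∃ p ∈ D, v = L p.1 p.2 lam} (θ lam))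
    -- Assumption A2 (Slater)
    (hslater : ∃ p ∈ D, ∀ e, ∑ t, H e t * p.2 t < c e)
    -- the restricted tree set T', containing at least one tree of every session
    (T' : Finset T) (hT' : ∀ s, ∃ t ∈ T', σ t = s)
    -- the domain D' of the restricted master problem
    (D' : Set ((S → ℝ) × (T → ℝ)))
    (hD' : D' = {p | p ∈ D ∧ ∀ t ∉ T', p.2 t = 0})
    -- the dual function of the RMP
    (θ' : (E → ℝ) → ℝ)
    (hθ' : ∀ lam : E → ℝ, IsGreatest {v | ∃ p ∈ D', v = L p.1 p.2 lam} (θ' lam))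
    -- Assumption A2 (Slater) for the RMP
    (hslater' : ∃ p ∈ D', ∀ e, ∑ t, H e t * p.2 t < c e)
    -- (x̄, ȳ, λ̄) is an optimal primal–dual pair of the RMP
    (xbar : S → ℝ) (ybar : T → ℝ) (lambar : E → ℝ)
    (hlambar_nonneg : ∀ e, 0 ≤ lambar e)
    (hlambar_min : ∀ μ : E → ℝ, (∀ e, 0 ≤ μ e) → θ' lambar ≤ θ' μ)
    (hbar_feas : (xbar, ybar) ∈ D' ∧ ∀ e, ∑ t, H e t * ybar t ≤ c e)
    (hbar_opt : ∀ p ∈ D', (∀ e, ∑ t, H e t * p.2 t ≤ c e) →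
      ∑ s, U s (p.1 s) ≤ ∑ s, U s (xbar s))
    (hduality : ∑ s, U s (xbar s) = θ' lambar)
    -- the global and local minimum tree costs under λ̄
    (γbar γ'bar : S → ℝ)
    (hγbar : ∀ s, IsLeast {w | ∃ t, σ t = s ∧ w = ∑ e, H e t * lambar e} (γbar s))
    (hγ'bar : ∀ s,
      IsLeast {w | ∃ t ∈ T', σ t = s ∧ w = ∑ e, H e t * lambar e} (γ'bar s))
    -- the approximation ratio ρ and the ρ-approximate tree costs at λ̄
    (ρ : ℝ) (hρ : 1 ≤ ρ) (γρ : S → ℝ)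
    (hγpos : ∀ s, 0 < γbar s)
    (hγρ : ∀ s, (1 / ρ) * γρ s ≤ γbar s ∧ γbar s ≤ γρ s)
    -- the condition satisfied at convergence of column generation
    (hconv : ∀ s, γρ s = γ'bar s)
    -- Assumption A3
    (hA3 : ∀ s, m s < xbar s)
    -- Assumption A4
    (hA4 : ∀ s, 0 ≤ U s (m s) -
      m s * derivWithin (U s) (Set.Icc (m s) (M s)) (m s))
 :
    θ' lambar ≤ fStar ∧ fStar ≤ θ (fun e => ρ * lambar e) ∧
    θ (fun e => ρ * lambar e) ≤ ρ * θ' lambar :=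
  imperfect_tree_scheduling_bound_general σ H c m M hm U hUconc hUdiff D hD L hL fStar hfStar θ hθ
    T' D' hD' θ' hθ' xbar ybar lambar hlambar_nonneg hbar_feas hduality γbar γ'bar hγbar hγ'bar ρ hρ
    γρ hγρ hconv hA3 hA4
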